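/- arXiv:2206.07688 — 2 statements merged into one kernel-verified Lean document; each statement's English description precedes it below -/
import Mathlib

section
/- For any summable weighted graph (G,m) whose vertex set has at least two elements, one has κ(G,m) ≥ 0. Moreover, if (G,m) is connected, then κ(G,m) = 0 if and only if G is bipartite. -/
open MeasureTheory

/-- A summable weighted graph on a vertex set `V`. -/
structure SummableWeightedGraph (V : Type*) where
  m : V → V → ℝ
  symm : ∀ u v, m u v = m v u
  nonneg : ∀ u v, 0 ≤ m u v
  loopless : ∀ v, m v v = 0
  summable : Summable fun p : V × V => m p.1 p.2
  noIsolated : ∀ v, 0 < ∑' u, m v u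

namespace SummableWeightedGraph

variable {V : Type*} (G : SummableWeightedGraph V)

/-- The weight of a vertex. -/
noncomputable def deg (v : V) : ℝ := ∑' u, G.m v u

/-- The weight of a set of vertices. -/
noncomputable def setWeight (S : Set V) : ℝ := ∑' v : S, G.deg v

/-- The weight of the boundary of a set of vertices. -/
noncomputable def boundaryWeight (S : Set V) : ℝ :=
  ∑' p : ↥S × ↥Sᶜ, G.m p.1 p.2

/-- The Cheeger constant. -/
noncomputable def cheegerConst : ℝ :=
  sInf { r : ℝ | ∃ S : Set V, S.Nonempty ∧ G.setWeight S ≤ G.setWeight Sᶜ ∧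
    r = G.boundaryWeight S / G.setWeight S }

/-- The weighted counting measure on vertices. -/
noncomputable def measure [MeasurableSpace V] : Measure V :=
  Measure.sum fun v => ENNReal.ofReal (G.deg v) • Measure.dirac v

/-- The normalised Laplacian, characterised by its pointwise formula. -/
def IsLaplacian [MeasurableSpace V]
    (L : Lp ℝ 2 G.measure →L[ℝ] Lp ℝ 2 G.measure) : Prop :=
  ∀ f : Lp ℝ 2 G.measure, ∀ᵐ v ∂G.measure,
    L f v = f v - (G.deg v)⁻¹ * ∑' u, G.m v u * f u

end SummableWeightedGraph

namespace SummableWeightedGraph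

variable {V : Type*} (G : SummableWeightedGraph V)

/-- `p_S(v)`, the probability that the random walk moves from `v` into `S` in one step. -/
noncomputable def pProb (S : Set V) (v : V) : ℝ := (∑' u : S, G.m v u) / G.deg v

/-- `κ(A,B)` for a partition `V = A ⊔ B` into nonempty sets. -/
noncomputable def kappaPair (A B : Set V) : ℝ :=
  max (⨆ v : A, G.pProb A v) (⨆ w : B, G.pProb B w)

/-- The invariant `κ(G,m)`. -/
noncomputable def kappa : ℝ :=
  sInf { r : ℝ | ∃ A B : Set V, A.Nonempty ∧ B.Nonempty ∧ Disjoint A B ∧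
    A ∪ B = Set.univ ∧ r = G.kappaPair A B }

end SummableWeightedGraph

/-!
A non-bipartite graph has a closed walk of odd length, and for every partition `V = A ⊔ B` one
of its steps `a → b` stays inside `A` or inside `B`; that step forces `κ(A,B) ≥ m(a,b)/m(a)`.
The minimum of these finitely many positive numbers along the walk is a positive lower bound
for `κ(G,m)`. Conversely, a bipartition `V = A ⊔ Aᶜ` has `κ(A,Aᶜ) = 0`.
-/

namespace SimpleGraph.Walk

variable {W : Type*} {H : SimpleGraph W}

theorem even_length_iff_of_forall_dart_crosses (A : Set W) {u v : W} (p : H.Walk u v)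
    (hp : ∀ d ∈ p.darts, ¬(d.fst ∈ A ↔ d.snd ∈ A)) : Even p.length ↔ (u ∈ A ↔ v ∈ A) := by
  induction p with
  | nil => simp
  | cons h p ih =>
    simp only [darts_cons, List.mem_cons, forall_eq_or_imp] at hp
    rw [length_cons, Nat.even_add_one, ih hp.2]
    have := hp.1
    tauto

theorem exists_dart_not_crossing_of_odd_length (A : Set W) {u : W} (p : H.Walk u u)
    (hp : Odd p.length) : ∃ d ∈ p.darts, (d.fst ∈ A ↔ d.snd ∈ A) := by
  by_contra h
  refine Nat.not_even_iff_odd.2 hp ((p.even_length_iff_of_forall_dart_crosses A ?_).2 Iff.rfl)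
  exact fun d hd hdA => h ⟨d, hd, hdA⟩

end SimpleGraph.Walk

namespace SummableWeightedGraph

variable {V : Type*} (G : SummableWeightedGraph V)

def toSimpleGraph : SimpleGraph V where
  Adj a b := 0 < G.m a b
  symm := ⟨fun a b h => by rwa [G.symm]⟩
  loopless := ⟨fun a h => by simp [G.loopless] at h⟩

def IsIndepSet (S : Set V) : Prop := ∀ u ∈ S, ∀ v ∈ S, G.m u v = 0

lemma deg_pos (v : V) : 0 < G.deg v := G.noIsolated v

lemma summable_m (v : V) : Summable (G.m v) := G.summable.prod_factor v

lemma exists_m_pos (v : V) : ∃ u, 0 < G.m v u := by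
  by_contra! h
  have hzero : G.deg v = 0 := by
    rw [deg, tsum_congr fun u => le_antisymm (h u) (G.nonneg v u), tsum_zero]
  exact (G.deg_pos v).ne' hzero

lemma pProb_nonneg (S : Set V) (v : V) : 0 ≤ G.pProb S v :=
  div_nonneg (tsum_nonneg fun u => G.nonneg v u) (G.deg_pos v).le

lemma pProb_le_one (S : Set V) (v : V) : G.pProb S v ≤ 1 := by
  rw [pProb, div_le_one (G.deg_pos v)]
  exact (G.summable_m v).tsum_subtype_le _ S (G.nonneg v)

lemma m_div_deg_le_pProb {S : Set V} (a : V) {b : V} (hb : b ∈ S) :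
    G.m a b / G.deg a ≤ G.pProb S a := by
  rw [pProb, div_le_div_iff_of_pos_right (G.deg_pos a)]
  exact ((G.summable_m a).subtype S).le_tsum ⟨b, hb⟩ fun u _ => G.nonneg a u.1

lemma pProb_eq_zero {S : Set V} (hS : G.IsIndepSet S) {v : V} (hv : v ∈ S) :
    G.pProb S v = 0 := by
  rw [pProb, tsum_congr fun u : S => hS v hv u u.2, tsum_zero, zero_div]

lemma le_iSup_pProb {S : Set V} {v : V} (hv : v ∈ S) :
    G.pProb S v ≤ ⨆ w : S, G.pProb S w :=
  le_ciSup (f := fun w : S => G.pProb S w) ⟨1, by rintro _ ⟨w, rfl⟩; exact G.pProb_le_one S w⟩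
    ⟨v, hv⟩

lemma pProb_le_kappaPair_left {A : Set V} (B : Set V) {a : V} (ha : a ∈ A) :
    G.pProb A a ≤ G.kappaPair A B :=
  (G.le_iSup_pProb ha).trans (le_max_left _ _)

lemma pProb_le_kappaPair_right (A : Set V) {B : Set V} {b : V} (hb : b ∈ B) :
    G.pProb B b ≤ G.kappaPair A B :=
  (G.le_iSup_pProb hb).trans (le_max_right _ _)

lemma m_div_deg_le_kappaPair {A B : Set V} {a b : V} (h : a ∈ A ∧ b ∈ A ∨ a ∈ B ∧ b ∈ B) :
    G.m a b / G.deg a ≤ G.kappaPair A B := by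
  rcases h with ⟨ha, hb⟩ | ⟨ha, hb⟩
  · exact (G.m_div_deg_le_pProb a hb).trans (G.pProb_le_kappaPair_left B ha)
  · exact (G.m_div_deg_le_pProb a hb).trans (G.pProb_le_kappaPair_right A ha)

lemma kappaPair_nonneg {A : Set V} (B : Set V) (hA : A.Nonempty) : 0 ≤ G.kappaPair A B :=
  (G.pProb_nonneg A hA.some).trans (G.pProb_le_kappaPair_left B hA.some_mem)

lemma kappaPair_compl_eq_zero {A : Set V} (hA : G.IsIndepSet A)
    (hAc : G.IsIndepSet Aᶜ) : G.kappaPair A Aᶜ = 0 := by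
  simp only [kappaPair, iSup_congr fun v : A => G.pProb_eq_zero hA v.2,
    iSup_congr fun v : ↥Aᶜ => G.pProb_eq_zero hAc v.2, Real.iSup_const_zero, max_self]

lemma compl_nonempty_of_forall_m_eq_zero [Nonempty V] {S : Set V}
    (hS : G.IsIndepSet S) : Sᶜ.Nonempty := by
  obtain ⟨v⟩ := ‹Nonempty V›
  by_cases hv : v ∈ S
  · obtain ⟨u, hu⟩ := G.exists_m_pos v
    exact ⟨u, fun huS => hu.ne' (hS v hv u huS)⟩
  · exact ⟨v, hv⟩

lemma kappa_nonneg : 0 ≤ G.kappa :=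
  Real.sInf_nonneg <| by
    rintro _ ⟨A, B, hA, -, -, -, rfl⟩
    exact G.kappaPair_nonneg B hA

lemma kappa_le_kappaPair {A B : Set V} (hA : A.Nonempty) (hB : B.Nonempty)
    (hAB : Disjoint A B) (hunion : A ∪ B = Set.univ) : G.kappa ≤ G.kappaPair A B := by
  refine csInf_le ⟨0, ?_⟩ ⟨A, B, hA, hB, hAB, hunion, rfl⟩
  rintro _ ⟨A', B', hA', -, -, -, rfl⟩
  exact G.kappaPair_nonneg B' hA'

lemma le_kappa [Nonempty V] {c : ℝ}
    (hc : ∀ A B : Set V, A ∪ B = Set.univ → c ≤ G.kappaPair A B) : c ≤ G.kappa := by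
  obtain ⟨v⟩ := ‹Nonempty V›
  obtain ⟨u, hu⟩ := G.exists_m_pos v
  refine le_csInf ⟨_, {v}, {v}ᶜ, Set.singleton_nonempty v, ⟨u, ?_⟩, disjoint_compl_right,
    Set.union_compl_self _, rfl⟩ ?_
  · rintro rfl
    exact hu.ne' (G.loopless u)
  · rintro _ ⟨A, B, -, -, -, hunion, rfl⟩
    exact hc A B hunion

lemma kappa_pos_of_odd_loop {u : V} (p : G.toSimpleGraph.Walk u u) (hp : Odd p.length) :
    0 < G.kappa := by
  classical
  have : Nonempty V := ⟨u⟩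
  have hdarts : p.darts.toFinset.Nonempty := List.toFinset_nonempty_iff _ |>.2 <|
    List.ne_nil_of_length_pos (p.length_darts ▸ hp.pos)
  set c := p.darts.toFinset.inf' hdarts fun d => G.m d.fst d.snd / G.deg d.fst
  have hc : 0 < c := (Finset.lt_inf'_iff _).2 fun d _ => div_pos d.adj (G.deg_pos _)
  refine hc.trans_le (G.le_kappa fun A B hunion => ?_)
  have hB : ∀ x, x ∉ A → x ∈ B := fun x hx =>
    (hunion ▸ Set.mem_univ x : x ∈ A ∪ B).resolve_left hx
  obtain ⟨d, hd, hdA⟩ := p.exists_dart_not_crossing_of_odd_length A hp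
  have hsame : d.fst ∈ A ∧ d.snd ∈ A ∨ d.fst ∈ B ∧ d.snd ∈ B := by
    by_cases h : d.fst ∈ A
    exacts [Or.inl ⟨h, hdA.1 h⟩, Or.inr ⟨hB _ h, hB _ (mt hdA.2 h)⟩]
  exact (Finset.inf'_le _ (List.mem_toFinset.2 hd)).trans (G.m_div_deg_le_kappaPair hsame)

lemma exists_bipartition_of_colorable_two (h : G.toSimpleGraph.Colorable 2) :
    ∃ A : Set V, G.IsIndepSet A ∧ G.IsIndepSet Aᶜ := by
  obtain ⟨c⟩ := h
  have hcolor : ∀ u v, c u = c v → G.m u v = 0 := fun u v huv =>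
    ((G.nonneg u v).eq_or_lt.resolve_right fun hadj => c.valid hadj huv).symm
  refine ⟨{v | c v = 0}, fun u hu v hv => hcolor u v (hu.trans hv.symm),
    fun u hu v hv => hcolor u v ?_⟩
  rw [Fin.eq_one_of_ne_zero _ hu, Fin.eq_one_of_ne_zero _ hv]

lemma kappa_eq_zero_of_bipartition {A : Set V} (hA : G.IsIndepSet A)
    (hAc : G.IsIndepSet Aᶜ) : G.kappa = 0 := by
  rcases isEmpty_or_nonempty V with hV | hV
  · simp [kappa, Set.Nonempty] -- no partitions at all, and `sInf ∅ = 0`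
  have hAne : A.Nonempty := compl_compl A ▸ G.compl_nonempty_of_forall_m_eq_zero hAc
  refine le_antisymm ?_ G.kappa_nonneg
  calc G.kappa ≤ G.kappaPair A Aᶜ := G.kappa_le_kappaPair hAne
        (G.compl_nonempty_of_forall_m_eq_zero hA) disjoint_compl_right (Set.union_compl_self A)
    _ = 0 := G.kappaPair_compl_eq_zero hA hAc

end SummableWeightedGraph

open SummableWeightedGraph in
theorem kappa_nonneg_and_eq_zero_iff_bipartite_general {V : Type*}
    (G : SummableWeightedGraph V) :
    0 ≤ G.kappa ∧
    ((∀ u v : V, Relation.ReflTransGen (fun a b => 0 < G.m a b) u v) →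
      (G.kappa = 0 ↔ ∃ A : Set V,
        (∀ u ∈ A, ∀ v ∈ A, G.m u v = 0) ∧ (∀ u ∈ Aᶜ, ∀ v ∈ Aᶜ, G.m u v = 0))) := by
  refine ⟨G.kappa_nonneg, fun _ => ⟨fun hκ => ?_, fun ⟨A, hA, hAc⟩ => ?_⟩⟩
  · by_contra hbip
    obtain ⟨u, p, hp⟩ : ∃ u, ∃ p : G.toSimpleGraph.Walk u u, Odd p.length := by
      simpa [SimpleGraph.two_colorable_iff_forall_loop_even] using
        mt G.exists_bipartition_of_colorable_two hbip
    exact (G.kappa_pos_of_odd_loop p hp).ne' hκ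
  · exact G.kappa_eq_zero_of_bipartition hA hAc

open SummableWeightedGraph in
/-- `κ(G,m) ≥ 0`; and if `(G,m)` is connected, then `κ(G,m) = 0` iff
`G` is bipartite. -/
theorem kappa_nonneg_and_eq_zero_iff_bipartite {V : Type*} [Countable V] [Nontrivial V]
    (G : SummableWeightedGraph V) :
    0 ≤ G.kappa ∧
    ((∀ u v : V, Relation.ReflTransGen (fun a b => 0 < G.m a b) u v) →
      (G.kappa = 0 ↔ ∃ A : Set V,
        (∀ u ∈ A, ∀ v ∈ A, G.m u v = 0) ∧ (∀ u ∈ Aᶜ, ∀ v ∈ Aᶜ, G.m u v = 0))) :=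
  kappa_nonneg_and_eq_zero_iff_bipartite_general G
end

section
/- For every summable weighted graph (G,m), the Cheeger constant h(G,m) equals the infimum of the Cheeger ratios h(S) taken over all Cheeger sets, i.e. over all nonempty sets S ⊆ V with m(S) ≤ m(V ∖ S) such that the induced subgraph on S is connected (any two vertices of S are joined by a finite path of edges of positive weight all of whose vertices lie in S). -/
open MeasureTheory

namespace SummableWeightedGraph

/-- The induced subgraph on `S` is connected: any two vertices of `S` are joined by a
finite path of edges of positive weight all of whose vertices lie in `S`. -/
def ConnectedIn {V : Type*} (G : SummableWeightedGraph V) (S : Set V) : Prop :=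
  ∀ u ∈ S, ∀ v ∈ S, Relation.ReflTransGen (fun a b => b ∈ S ∧ 0 < G.m a b) u v

end SummableWeightedGraph

/-!
Split a set `S` into the connected components of the subgraph it induces. No edge of positive
weight joins two different components, so both the weight of `S` and the weight of its boundary
are the sums of the corresponding weights of the components. By the mediant inequality some
component has Cheeger ratio at most `h(S)`, and being a subset of `S` it still satisfies the
balance condition `m(C) ≤ m(V ∖ C)`.
-/

open scoped ENNReal

theorem ENNReal.exists_mul_tsum_le_tsum_mul {ι : Type*} [Nonempty ι] (a b : ι → ℝ≥0∞)
    (h : (∑' i, a i) * ∑' i, b i ≠ ∞) : ∃ i, a i * ∑' j, b j ≤ (∑' j, a j) * b i := by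
  by_contra! hlt
  have hsum := ENNReal.tsum_lt_tsum (by rwa [ENNReal.tsum_mul_left])
    (fun i => (hlt i).le) (hlt (Classical.arbitrary ι))
  rw [ENNReal.tsum_mul_left, ENNReal.tsum_mul_right, mul_comm] at hsum
  exact lt_irrefl _ hsum

namespace SummableWeightedGraph

variable {V : Type*} (G : SummableWeightedGraph V)

section Weights

noncomputable def ennSetWeight (S : Set V) : ℝ≥0∞ := ∑' v : S, ENNReal.ofReal (G.deg v)

noncomputable def ennBoundaryWeight (S : Set V) : ℝ≥0∞ :=
  ∑' v : S, ∑' u : ↥Sᶜ, ENNReal.ofReal (G.m v u)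

theorem deg_nonneg (v : V) : 0 ≤ G.deg v := tsum_nonneg (G.nonneg v)

theorem ofReal_deg (v : V) : ENNReal.ofReal (G.deg v) = ∑' u, ENNReal.ofReal (G.m v u) :=
  ENNReal.ofReal_tsum_of_nonneg (G.nonneg v) (G.summable.prod_factor v)

theorem tsum_ofReal_m_ne_top : ∑' p : V × V, ENNReal.ofReal (G.m p.1 p.2) ≠ ∞ := by
  rw [← ENNReal.ofReal_tsum_of_nonneg (f := fun p : V × V => G.m p.1 p.2)
    (fun p => G.nonneg p.1 p.2) G.summable]
  exact ENNReal.ofReal_ne_top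

theorem ennSetWeight_ne_top (S : Set V) : G.ennSetWeight S ≠ ∞ := by
  refine ne_top_of_le_ne_top G.tsum_ofReal_m_ne_top ?_
  calc G.ennSetWeight S ≤ ∑' v, ENNReal.ofReal (G.deg v) :=
        ENNReal.tsum_comp_le_tsum_of_injective Subtype.val_injective _
    _ = ∑' p : V × V, ENNReal.ofReal (G.m p.1 p.2) := by
        simp only [ofReal_deg, ENNReal.tsum_prod']

theorem ennBoundaryWeight_eq_tsum_prod (S : Set V) :
    G.ennBoundaryWeight S = ∑' p : ↥S × ↥Sᶜ, ENNReal.ofReal (G.m p.1 p.2) := by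
  rw [ennBoundaryWeight, ENNReal.tsum_prod']

theorem ennBoundaryWeight_ne_top (S : Set V) : G.ennBoundaryWeight S ≠ ∞ := by
  rw [ennBoundaryWeight_eq_tsum_prod]
  exact ne_top_of_le_ne_top G.tsum_ofReal_m_ne_top
    (ENNReal.tsum_comp_le_tsum_of_injective
      (Subtype.val_injective.prodMap Subtype.val_injective) fun p => ENNReal.ofReal (G.m p.1 p.2))

theorem setWeight_eq_toReal (S : Set V) : G.setWeight S = (G.ennSetWeight S).toReal := by
  rw [ennSetWeight, ENNReal.tsum_toReal_eq fun _ => ENNReal.ofReal_ne_top]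
  exact tsum_congr fun v => (ENNReal.toReal_ofReal (G.deg_nonneg v)).symm

theorem boundaryWeight_eq_toReal (S : Set V) :
    G.boundaryWeight S = (G.ennBoundaryWeight S).toReal := by
  rw [ennBoundaryWeight_eq_tsum_prod, ENNReal.tsum_toReal_eq fun _ => ENNReal.ofReal_ne_top]
  exact tsum_congr fun p => (ENNReal.toReal_ofReal (G.nonneg _ _)).symm

theorem setWeight_mono {S T : Set V} (h : S ⊆ T) : G.setWeight S ≤ G.setWeight T := by
  rw [setWeight_eq_toReal, setWeight_eq_toReal]
  exact ENNReal.toReal_mono (G.ennSetWeight_ne_top T)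
    (ENNReal.tsum_mono_subtype (fun v => ENNReal.ofReal (G.deg v)) h)

theorem setWeight_pos {S : Set V} (hS : S.Nonempty) : 0 < G.setWeight S := by
  obtain ⟨v, hv⟩ := hS
  rw [setWeight_eq_toReal]
  refine ENNReal.toReal_pos (ne_of_gt ?_) (G.ennSetWeight_ne_top S)
  exact (ENNReal.ofReal_pos.mpr (G.noIsolated v)).trans_le (ENNReal.le_tsum (⟨v, hv⟩ : S))

end Weights

section Components

variable (S : Set V)

/-- `G.ConnectedIn S` unfolds to `∀ u ∈ S, ∀ v ∈ S, ReflTransGen (G.StepIn S) u v`. -/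
def StepIn (a b : V) : Prop := b ∈ S ∧ 0 < G.m a b

variable {G S}

theorem mem_of_reflTransGen_stepIn {u v : V} (hu : u ∈ S)
    (h : Relation.ReflTransGen (G.StepIn S) u v) : v ∈ S := by
  rcases h.cases_tail with rfl | ⟨_, -, hv⟩
  exacts [hu, hv.1]

theorem reflTransGen_stepIn_symm {u v : V} (hu : u ∈ S)
    (h : Relation.ReflTransGen (G.StepIn S) u v) : Relation.ReflTransGen (G.StepIn S) v u := by
  induction h with
  | refl => exact .refl
  | @tail b c hub hbc ih =>
    have hb : b ∈ S := mem_of_reflTransGen_stepIn hu hub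
    exact ih.head ⟨hb, G.symm b c ▸ hbc.2⟩

variable (G S)

def componentSetoid : Setoid S where
  r x y := Relation.ReflTransGen (G.StepIn S) x y
  iseqv := ⟨fun _ => .refl, fun {x _} h => reflTransGen_stepIn_symm x.2 h, .trans⟩

def component (q : Quotient (G.componentSetoid S)) : Set V :=
  {v | ∃ h : v ∈ S, ⟦(⟨v, h⟩ : S)⟧ = q}

variable {G S} {q : Quotient (G.componentSetoid S)}

theorem component_subset : G.component S q ⊆ S := fun _ hv => hv.1

theorem component_nonempty : (G.component S q).Nonempty := by
  obtain ⟨x, rfl⟩ := Quotient.exists_rep q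
  exact ⟨x, x.2, rfl⟩

theorem mem_component_of_stepIn {u w : V} (hu : u ∈ G.component S q) (h : G.StepIn S u w) :
    w ∈ G.component S q := by
  obtain ⟨huS, rfl⟩ := hu
  exact ⟨h.1, (Quotient.sound (Relation.ReflTransGen.single h : Relation.ReflTransGen _ u w)).symm⟩

theorem m_eq_zero_of_mem_component {u w : V} (hu : u ∈ G.component S q) (hw : w ∈ S)
    (hwq : w ∉ G.component S q) : G.m u w = 0 :=
  le_antisymm (not_lt.mp fun hpos => hwq (mem_component_of_stepIn hu ⟨hw, hpos⟩)) (G.nonneg u w)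

theorem reflTransGen_stepIn_component {u w : V} (hu : u ∈ G.component S q)
    (h : Relation.ReflTransGen (G.StepIn S) u w) :
    Relation.ReflTransGen (G.StepIn (G.component S q)) u w := by
  induction h with
  | refl => exact .refl
  | tail _ hbc ih =>
    exact ih.tail ⟨mem_component_of_stepIn (mem_of_reflTransGen_stepIn hu ih) hbc, hbc.2⟩

theorem connectedIn_component : G.ConnectedIn (G.component S q) := fun u hu w hw =>
  reflTransGen_stepIn_component hu
    (Quotient.exact (hu.2.trans hw.2.symm) : G.componentSetoid S ⟨u, hu.1⟩ ⟨w, hw.1⟩)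

variable (G S)

theorem tsum_eq_tsum_component (f : V → ℝ≥0∞) :
    ∑' v : S, f v = ∑' q, ∑' v : G.component S q, f v := by
  rw [← ENNReal.tsum_fiberwise (fun v : S => f v) (Quotient.mk (G.componentSetoid S))]
  exact tsum_congr fun q =>
    (Equiv.subtypeSubtypeEquivSubtypeExists (· ∈ S) (fun x => ⟦x⟧ = q)).tsum_eq fun v => f v.1

theorem ennSetWeight_eq_tsum_component :
    G.ennSetWeight S = ∑' q, G.ennSetWeight (G.component S q) :=
  G.tsum_eq_tsum_component S fun v => ENNReal.ofReal (G.deg v)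

theorem ennBoundaryWeight_component (q : Quotient (G.componentSetoid S)) :
    G.ennBoundaryWeight (G.component S q) =
      ∑' v : G.component S q, ∑' u : ↥Sᶜ, ENNReal.ofReal (G.m v u) := by
  refine tsum_congr fun v => ?_
  have hcompl : (G.component S q)ᶜ = Sᶜ ∪ (S \ G.component S q) := by
    rw [← compl_sdiff_compl, Set.union_sdiff_cancel (Set.compl_subset_compl.mpr component_subset)]
  have hzero : ∑' u : ↥(S \ G.component S q), ENNReal.ofReal (G.m v u) = 0 :=
    ENNReal.tsum_eq_zero.mpr fun ⟨_, huS, huq⟩ => by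
      simp [m_eq_zero_of_mem_component v.2 huS huq]
  rw [hcompl, ENNReal.summable.tsum_union_disjoint (f := fun u => ENNReal.ofReal (G.m v u))
    (disjoint_compl_left.mono_right Set.sdiff_subset) ENNReal.summable, hzero, add_zero]

theorem ennBoundaryWeight_eq_tsum_component :
    G.ennBoundaryWeight S = ∑' q, G.ennBoundaryWeight (G.component S q) := by
  simp only [ennBoundaryWeight_component]
  exact G.tsum_eq_tsum_component S fun v => ∑' u : ↥Sᶜ, ENNReal.ofReal (G.m v u)

end Components

theorem exists_connectedIn_subset_ratio_le {S : Set V} (hS : S.Nonempty) :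
    ∃ C ⊆ S, C.Nonempty ∧ G.ConnectedIn C ∧
      G.boundaryWeight C / G.setWeight C ≤ G.boundaryWeight S / G.setWeight S := by
  have : Nonempty (Quotient (G.componentSetoid S)) := ⟨⟦⟨_, hS.some_mem⟩⟧⟩
  obtain ⟨q, hq⟩ := ENNReal.exists_mul_tsum_le_tsum_mul
    (fun q => G.ennBoundaryWeight (G.component S q)) (fun q => G.ennSetWeight (G.component S q))
    (by
      rw [← ennSetWeight_eq_tsum_component, ← ennBoundaryWeight_eq_tsum_component]
      exact ENNReal.mul_ne_top (G.ennBoundaryWeight_ne_top S) (G.ennSetWeight_ne_top S))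
  rw [← ennSetWeight_eq_tsum_component, ← ennBoundaryWeight_eq_tsum_component] at hq
  refine ⟨G.component S q, component_subset, component_nonempty, connectedIn_component, ?_⟩
  rw [div_le_div_iff₀ (G.setWeight_pos component_nonempty) (G.setWeight_pos hS),
    boundaryWeight_eq_toReal, boundaryWeight_eq_toReal, setWeight_eq_toReal, setWeight_eq_toReal,
    ← ENNReal.toReal_mul, ← ENNReal.toReal_mul]
  exact ENNReal.toReal_mono
    (ENNReal.mul_ne_top (G.ennBoundaryWeight_ne_top S) (G.ennSetWeight_ne_top _)) hq

end SummableWeightedGraph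

open SummableWeightedGraph in
theorem cheegerConst_eq_inf_over_connected_general {V : Type*}
    (G : SummableWeightedGraph V) :
    G.cheegerConst = sInf { r : ℝ | ∃ S : Set V, S.Nonempty ∧
      G.setWeight S ≤ G.setWeight Sᶜ ∧ G.ConnectedIn S ∧
      r = G.boundaryWeight S / G.setWeight S } := by
  refine csInf_eq_csInf_of_forall_exists_le ?_
    fun r ⟨S, hS, hbal, _, hr⟩ => ⟨r, ⟨S, hS, hbal, hr⟩, le_rfl⟩
  rintro r ⟨S, hS, hbal, rfl⟩
  obtain ⟨C, hCS, hC, hconn, hratio⟩ := G.exists_connectedIn_subset_ratio_le hS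
  have hCbal : G.setWeight C ≤ G.setWeight Cᶜ :=
    (G.setWeight_mono hCS).trans <| hbal.trans <| G.setWeight_mono (Set.compl_subset_compl.mpr hCS)
  exact ⟨_, ⟨C, hC, hCbal, hconn, rfl⟩, hratio⟩

open SummableWeightedGraph in
/-- the Cheeger constant equals the infimum of the Cheeger ratios over
Cheeger sets, i.e. over sets inducing connected subgraphs. -/
theorem cheegerConst_eq_inf_over_connected {V : Type*} [Countable V] [Nonempty V]
    (G : SummableWeightedGraph V) :
    G.cheegerConst = sInf { r : ℝ | ∃ S : Set V, S.Nonempty ∧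
      G.setWeight S ≤ G.setWeight Sᶜ ∧ G.ConnectedIn S ∧
      r = G.boundaryWeight S / G.setWeight S } :=
  cheegerConst_eq_inf_over_connected_general G
end
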